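/- arXiv:2507.00812 — 6 statements merged into one kernel-verified Lean document; each statement's English description precedes it below -/
import Mathlib

section
/- For every (x1, x2, x3) in the standard 2-dimensional simplex (x1+x2+x3=1, all xi ≥ 0) with min{x1,x2,x3} > 0, one has x1*x2*x3 / (1 - (x1^4 + x2^4 + x3^4)) ≤ 1/26. -/
/-- Fact 2.1(i): for (x₁,x₂,x₃) in the standard 2-dimensional simplex with all
coordinates positive, x₁x₂x₃/(1-(x₁⁴+x₂⁴+x₃⁴)) ≤ 1/26. -/
theorem simplex_ineq_one (x1 x2 x3 : ℝ)
    (h1 : 0 ≤ x1) (h2 : 0 ≤ x2) (h3 : 0 ≤ x3)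
    (hsum : x1 + x2 + x3 = 1)
    (hmin : 0 < min x1 (min x2 x3)) :
    x1 * x2 * x3 / (1 - (x1 ^ 4 + x2 ^ 4 + x3 ^ 4)) ≤ 1 / 26 := by
  have p1 : 0 < x1 := lt_of_lt_of_le hmin (min_le_left _ _)
  have p2 : 0 < x2 := lt_of_lt_of_le hmin ((min_le_right _ _).trans (min_le_left _ _))
  have p3 : 0 < x3 := lt_of_lt_of_le hmin ((min_le_right _ _).trans (min_le_right _ _))
  have hd : 0 < 1 - (x1 ^ 4 + x2 ^ 4 + x3 ^ 4) := by
    have q1 : x1 ^ 4 < x1 ^ 1 := pow_lt_pow_right_of_lt_one₀ p1 (by linarith) (by norm_num)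
    have q2 : x2 ^ 4 < x2 ^ 1 := pow_lt_pow_right_of_lt_one₀ p2 (by linarith) (by norm_num)
    have q3 : x3 ^ 4 < x3 ^ 1 := pow_lt_pow_right_of_lt_one₀ p3 (by linarith) (by norm_num)
    simp only [pow_one] at q1 q2 q3
    linarith
  have key : 26 * (x1 * x2 * x3) * (x1 + x2 + x3) ≤
      (x1 + x2 + x3) ^ 4 - (x1 ^ 4 + x2 ^ 4 + x3 ^ 4) := by
    nlinarith [mul_nonneg (mul_nonneg h1 h2) (sq_nonneg (x1 - x2)),
      mul_nonneg (mul_nonneg h2 h3) (sq_nonneg (x2 - x3)),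
      mul_nonneg (mul_nonneg h1 h3) (sq_nonneg (x1 - x3)),
      sq_nonneg (x1*x2 - x2*x3), sq_nonneg (x2*x3 - x1*x3), sq_nonneg (x1*x2 - x1*x3)]
  rw [hsum] at key
  rw [div_le_div_iff₀ hd (by norm_num)]
  nlinarith [key]
end

section
/- For every (x1, x2, x3) in the standard 2-dimensional simplex with min{x1,x2,x3} ≥ 1/5, one has x1*x2*x3 + (x1^4 + x2^4 + x3^4)/26 ≤ 1/26 - (1/15)*((x1-1/3)² + (x2-1/3)² + (x3-1/3)²). -/
/-- Fact 2.1(iii): for (x₁,x₂,x₃) in the standard 2-dimensional simplex with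
min{x₁,x₂,x₃} ≥ 1/5, one has
x₁x₂x₃ + (x₁⁴+x₂⁴+x₃⁴)/26 ≤ 1/26 - (1/15)·Σᵢ(xᵢ-1/3)². -/
theorem simplex_ineq_two (x1 x2 x3 : ℝ)
    (h1 : 0 ≤ x1) (h2 : 0 ≤ x2) (h3 : 0 ≤ x3)
    (hsum : x1 + x2 + x3 = 1)
    (hmin : 1 / 5 ≤ min x1 (min x2 x3)) :
    x1 * x2 * x3 + (x1 ^ 4 + x2 ^ 4 + x3 ^ 4) / 26 ≤
      1 / 26 - (1 / 15) * ((x1 - 1 / 3) ^ 2 + (x2 - 1 / 3) ^ 2 + (x3 - 1 / 3) ^ 2) := by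
  have ha : 1 / 5 ≤ x1 := le_trans hmin (min_le_left _ _)
  have hb : 1 / 5 ≤ x2 := le_trans hmin (le_trans (min_le_right _ _) (min_le_left _ _))
  have hc : 1 / 5 ≤ x3 := le_trans hmin (le_trans (min_le_right _ _) (min_le_right _ _))
  have hx3 : x3 = 1 - x1 - x2 := by linarith
  subst hx3
  have hb1 : x1 ≤ 3 / 5 := by linarith
  have hb2 : x2 ≤ 3 / 5 := by linarith
  have t1 : 0 ≤ (x1 - 1/5) * (x2 - (1 - x1 - x2)) ^ 2 :=
    mul_nonneg (by linarith) (sq_nonneg _)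
  have t2 : 0 ≤ (x2 - 1/5) * (x1 - (1 - x1 - x2)) ^ 2 :=
    mul_nonneg (by linarith) (sq_nonneg _)
  have t3 : 0 ≤ ((1 - x1 - x2) - 1/5) * (x1 - x2) ^ 2 :=
    mul_nonneg (by linarith) (sq_nonneg _)
  have t4 : 0 ≤ (3/5 - x1) * (x2 - (1 - x1 - x2)) ^ 2 :=
    mul_nonneg (by linarith) (sq_nonneg _)
  have t5 : 0 ≤ (3/5 - x2) * (x1 - (1 - x1 - x2)) ^ 2 :=
    mul_nonneg (by linarith) (sq_nonneg _)
  have t6 : 0 ≤ (3/5 - (1 - x1 - x2)) * (x1 - x2) ^ 2 :=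
    mul_nonneg (by linarith) (sq_nonneg _)
  have t7 : 0 ≤ ((x1 - 1/5) * (3/5 - x1)) * (x2 - (1 - x1 - x2)) ^ 2 :=
    mul_nonneg (mul_nonneg (by linarith) (by linarith)) (sq_nonneg _)
  have t8 : 0 ≤ ((x2 - 1/5) * (3/5 - x2)) * (x1 - (1 - x1 - x2)) ^ 2 :=
    mul_nonneg (mul_nonneg (by linarith) (by linarith)) (sq_nonneg _)
  have t9 : 0 ≤ (((1 - x1 - x2) - 1/5) * (3/5 - (1 - x1 - x2))) * (x1 - x2) ^ 2 :=
    mul_nonneg (mul_nonneg (by linarith) (by linarith)) (sq_nonneg _)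
  nlinarith [t1, t2, t3, t4, t5, t6, t7, t8, t9]
end

section
/- For every integer ℓ ≥ 5 with ℓ not divisible by 3, there exists a homomorphism from the tight ℓ-cycle minus one edge C_ℓ^{3-} to C5^{3-}. -/
open Finset

def cycMinus (l : ℕ) : Finset (Finset ℕ) :=
  ((Finset.range (l - 2)).image fun i => ({i, i + 1, i + 2} : Finset ℕ)) ∪
    {({l - 2, l - 1, 0} : Finset ℕ)}

def psi1 (j : ℕ) : ℕ :=
  if j = 0 then 0 else if j = 1 then 3 else if j = 2 then 4 else
  if j % 3 = 0 then 2 else if j % 3 = 1 then 3 else 1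

def psi2 (j : ℕ) : ℕ :=
  if j = 0 then 0 else if j = 1 then 1 else
  if j % 3 = 0 then 3 else if j % 3 = 1 then 4 else 2

lemma psi1_big {j : ℕ} (h : 3 ≤ j) :
    psi1 j = if j % 3 = 0 then 2 else if j % 3 = 1 then 3 else 1 := by
  unfold psi1
  rw [if_neg (by omega), if_neg (by omega), if_neg (by omega)]

lemma psi2_big {j : ℕ} (h : 2 ≤ j) :
    psi2 j = if j % 3 = 0 then 3 else if j % 3 = 1 then 4 else 2 := by
  unfold psi2
  rw [if_neg (by omega), if_neg (by omega)]

lemma image_triple (ψ : ℕ → ℕ) (a b c : ℕ) :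
    ({a, b, c} : Finset ℕ).image ψ = {ψ a, ψ b, ψ c} := by
  simp [Finset.image_insert]

lemma mem_cycMinus {l : ℕ} {e : Finset ℕ} :
    e ∈ cycMinus l ↔ (∃ i < l - 2, e = ({i, i+1, i+2} : Finset ℕ)) ∨
      e = ({l - 2, l - 1, 0} : Finset ℕ) := by
  simp [cycMinus, eq_comm]
  exact or_comm

/-- For every integer ℓ ≥ 5 with 3 ∤ ℓ there exists a homomorphism from
C_ℓ³⁻ to C₅³⁻ : a map ψ that is injective on every edge and sends every edge
of C_ℓ³⁻ to an edge of C₅³⁻. -/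
theorem hom_cycMinus_to_c5minus (l : ℕ) (hl : 5 ≤ l) (hmod : ¬ (3 ∣ l)) :
    ∃ ψ : ℕ → ℕ, ∀ e ∈ cycMinus l, (e.image ψ).card = 3 ∧ e.image ψ ∈ cycMinus 5 := by
  have hm : l % 3 = 1 ∨ l % 3 = 2 := by omega
  rcases hm with hm | hm
  · -- use psi1
    refine ⟨psi1, fun e he => ?_⟩
    rw [mem_cycMinus] at he
    rcases he with ⟨i, hi, rfl⟩ | rfl
    · rcases (show i = 0 ∨ i = 1 ∨ i = 2 ∨ 3 ≤ i from by omega) with rfl | rfl | rfl | h3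
      · rw [image_triple, show psi1 0 = 0 from rfl, show psi1 1 = 3 from rfl,
          show psi1 2 = 4 from rfl]
        exact ⟨by decide, by decide⟩
      · rw [image_triple, show psi1 1 = 3 from rfl, show psi1 2 = 4 from rfl,
          show psi1 3 = 2 from rfl]
        exact ⟨by decide, by decide⟩
      · rw [image_triple, show psi1 2 = 4 from rfl, show psi1 3 = 2 from rfl,
          show psi1 4 = 3 from rfl]
        exact ⟨by decide, by decide⟩
      · rcases (show i % 3 = 0 ∨ i % 3 = 1 ∨ i % 3 = 2 from by omega) with h | h | h
        · have e1 : psi1 i = 2 := by rw [psi1_big h3]; simp [h]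
          have e2 : psi1 (i+1) = 3 := by
            rw [psi1_big (by omega)]; rw [show (i+1) % 3 = 1 by omega]; norm_num
          have e3 : psi1 (i+2) = 1 := by
            rw [psi1_big (by omega)]; rw [show (i+2) % 3 = 2 by omega]; norm_num
          rw [image_triple, e1, e2, e3]
          exact ⟨by decide, by decide⟩
        · have e1 : psi1 i = 3 := by rw [psi1_big h3, h]; norm_num
          have e2 : psi1 (i+1) = 1 := by
            rw [psi1_big (by omega)]; rw [show (i+1) % 3 = 2 by omega]; norm_num
          have e3 : psi1 (i+2) = 2 := by
            rw [psi1_big (by omega)]; rw [show (i+2) % 3 = 0 by omega]; norm_num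
          rw [image_triple, e1, e2, e3]
          exact ⟨by decide, by decide⟩
        · have e1 : psi1 i = 1 := by rw [psi1_big h3, h]; norm_num
          have e2 : psi1 (i+1) = 2 := by
            rw [psi1_big (by omega)]; rw [show (i+1) % 3 = 0 by omega]; norm_num
          have e3 : psi1 (i+2) = 3 := by
            rw [psi1_big (by omega)]; rw [show (i+2) % 3 = 1 by omega]; norm_num
          rw [image_triple, e1, e2, e3]
          exact ⟨by decide, by decide⟩
    · -- wrap edge: l-2 % 3 = 2 → 1, l-1 % 3 = 0 → 2
      have e1 : psi1 (l-2) = 1 := by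
        rw [psi1_big (by omega)]; rw [show (l-2) % 3 = 2 by omega]; norm_num
      have e2 : psi1 (l-1) = 2 := by
        rw [psi1_big (by omega)]; rw [show (l-1) % 3 = 0 by omega]; norm_num
      have e3 : psi1 0 = 0 := by rfl
      rw [image_triple, e1, e2, e3]
      exact ⟨by decide, by decide⟩
  · -- use psi2
    refine ⟨psi2, fun e he => ?_⟩
    rw [mem_cycMinus] at he
    rcases he with ⟨i, hi, rfl⟩ | rfl
    · rcases (show i = 0 ∨ i = 1 ∨ 2 ≤ i from by omega) with rfl | rfl | h3
      · rw [image_triple, show psi2 0 = 0 from rfl, show psi2 1 = 1 from rfl,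
          show psi2 2 = 2 from rfl]
        exact ⟨by decide, by decide⟩
      · rw [image_triple, show psi2 1 = 1 from rfl, show psi2 2 = 2 from rfl,
          show psi2 3 = 3 from rfl]
        exact ⟨by decide, by decide⟩
      · rcases (show i % 3 = 0 ∨ i % 3 = 1 ∨ i % 3 = 2 from by omega) with h | h | h
        · have e1 : psi2 i = 3 := by rw [psi2_big h3]; simp [h]
          have e2 : psi2 (i+1) = 4 := by
            rw [psi2_big (by omega)]; rw [show (i+1) % 3 = 1 by omega]; norm_num
          have e3 : psi2 (i+2) = 2 := by
            rw [psi2_big (by omega)]; rw [show (i+2) % 3 = 2 by omega]; norm_num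
          rw [image_triple, e1, e2, e3]
          exact ⟨by decide, by decide⟩
        · have e1 : psi2 i = 4 := by rw [psi2_big h3, h]; norm_num
          have e2 : psi2 (i+1) = 2 := by
            rw [psi2_big (by omega)]; rw [show (i+1) % 3 = 2 by omega]; norm_num
          have e3 : psi2 (i+2) = 3 := by
            rw [psi2_big (by omega)]; rw [show (i+2) % 3 = 0 by omega]; norm_num
          rw [image_triple, e1, e2, e3]
          exact ⟨by decide, by decide⟩
        · have e1 : psi2 i = 2 := by rw [psi2_big h3, h]; norm_num
          have e2 : psi2 (i+1) = 3 := by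
            rw [psi2_big (by omega)]; rw [show (i+1) % 3 = 0 by omega]; norm_num
          have e3 : psi2 (i+2) = 4 := by
            rw [psi2_big (by omega)]; rw [show (i+2) % 3 = 1 by omega]; norm_num
          rw [image_triple, e1, e2, e3]
          exact ⟨by decide, by decide⟩
    · have e1 : psi2 (l-2) = 3 := by
        rw [psi2_big (by omega)]; rw [show (l-2) % 3 = 0 by omega]; norm_num
      have e2 : psi2 (l-1) = 4 := by
        rw [psi2_big (by omega)]; rw [show (l-1) % 3 = 1 by omega]; norm_num
      have e3 : psi2 0 = 0 := by rfl
      rw [image_triple, e1, e2, e3]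
      exact ⟨by decide, by decide⟩
end

section
/- Every T_rec-subconstruction is C_ℓ^{3-}-free for every integer ℓ ≥ 4 with ℓ not divisible by 3. (Equivalently: every T_rec-construction contains no copy of C_ℓ^{3-} when 3 ∤ ℓ.) -/
open Finset

/-- The complete 3-partite 3-graph with parts `V1, V2, V3`. -/
def ktriples (V1 V2 V3 : Finset ℕ) : Finset (Finset ℕ) :=
  (V1 ×ˢ V2 ×ˢ V3).image fun p => {p.1, p.2.1, p.2.2}

/-- `IsTrec V H` : `H` is a T_rec-construction on the vertex set `V`:
either `V` has at most 2 vertices and `H` is empty, or `V` splits into three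
nonempty parts, `H` consists of all transversal triples plus a
T_rec-construction inside each part. -/
inductive IsTrec : Finset ℕ → Finset (Finset ℕ) → Prop
  | base (V : Finset ℕ) (h : V.card ≤ 2) : IsTrec V ∅
  | build (V V1 V2 V3 : Finset ℕ) (H1 H2 H3 : Finset (Finset ℕ))
      (h1 : V1.Nonempty) (h2 : V2.Nonempty) (h3 : V3.Nonempty)
      (d12 : Disjoint V1 V2) (d13 : Disjoint V1 V3) (d23 : Disjoint V2 V3)
      (hU : V1 ∪ V2 ∪ V3 = V)
      (t1 : IsTrec V1 H1) (t2 : IsTrec V2 H2) (t3 : IsTrec V3 H3) :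
      IsTrec V (ktriples V1 V2 V3 ∪ H1 ∪ H2 ∪ H3)

/-- Auxiliary coloring: which part a vertex belongs to. -/
def colFn (V1 V2 : Finset ℕ) (x : ℕ) : ℕ :=
  if x ∈ V1 then 0 else if x ∈ V2 then 1 else 2

lemma colFn_lt3 (V1 V2 : Finset ℕ) (x : ℕ) : colFn V1 V2 x < 3 := by
  unfold colFn; split_ifs <;> omega

lemma colFn_eq0 {V1 V2 : Finset ℕ} {x : ℕ} (h : x ∈ V1) : colFn V1 V2 x = 0 := by
  simp [colFn, h]

lemma colFn_eq1 {V1 V2 : Finset ℕ} {x : ℕ} (hd : Disjoint V1 V2) (h : x ∈ V2) :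
    colFn V1 V2 x = 1 := by
  have h1 : x ∉ V1 := Finset.disjoint_right.mp hd h
  simp [colFn, h1, h]

lemma colFn_eq2 {V1 V2 : Finset ℕ} {x : ℕ} (h1 : x ∉ V1) (h2 : x ∉ V2) :
    colFn V1 V2 x = 2 := by
  simp [colFn, h1, h2]

/-- Every edge of a T_rec-construction is contained in the vertex set. -/
lemma trec_edge_subset {V : Finset ℕ} {H : Finset (Finset ℕ)} (h : IsTrec V H) :
    ∀ e ∈ H, e ⊆ V := by
  induction h with
  | base V h => simp
  | build V V1 V2 V3 H1 H2 H3 h1 h2 h3 d12 d13 d23 hU t1 t2 t3 ih1 ih2 ih3 =>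
    have hs1 : V1 ⊆ V := by rw [← hU]; intro x hx; simp [hx]
    have hs2 : V2 ⊆ V := by rw [← hU]; intro x hx; simp [hx]
    have hs3 : V3 ⊆ V := by rw [← hU]; intro x hx; simp [hx]
    intro e he
    simp only [Finset.mem_union] at he
    rcases he with ((hk | h1') | h2') | h3'
    · simp only [ktriples, Finset.mem_image, Finset.mem_product] at hk
      obtain ⟨⟨p, q, r⟩, ⟨hp, hq, hr⟩, heq⟩ := hk
      intro x hx
      rw [← heq] at hx
      simp only [Finset.mem_insert, Finset.mem_singleton] at hx
      rcases hx with rfl | rfl | rfl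
      · exact hs1 hp
      · exact hs2 hq
      · exact hs3 hr
    · exact fun x hx => hs1 (ih1 e h1' hx)
    · exact fun x hx => hs2 (ih2 e h2' hx)
    · exact fun x hx => hs3 (ih3 e h3' hx)

/-- Every T_rec-subconstruction is C_ℓ³⁻-free for every ℓ ≥ 4 with 3 ∤ ℓ:
no subgraph of a T_rec-construction contains a copy of C_ℓ³⁻. -/
theorem trec_subconstruction_cycMinus_free (l : ℕ) (hl : 4 ≤ l) (hmod : ¬ (3 ∣ l))
    (V : Finset ℕ) (Hc H : Finset (Finset ℕ))
    (ht : IsTrec V Hc) (hsub : H ⊆ Hc) :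
    ¬ ∃ ψ : ℕ → ℕ, Set.InjOn ψ ↑(Finset.range l) ∧
        ∀ e ∈ cycMinus l, e.image ψ ∈ H := by
  revert H
  induction ht with
  | base V hV =>
    intro H hsub
    rintro ⟨ψ, hinj, hmem⟩
    have h012 : ({0, 1, 2} : Finset ℕ) ∈ cycMinus l := by
      simp only [cycMinus, Finset.mem_union, Finset.mem_image, Finset.mem_range]
      exact Or.inl ⟨0, by omega, rfl⟩
    exact absurd (hsub (hmem _ h012)) (Finset.notMem_empty _)
  | build V V1 V2 V3 H1 H2 H3 h1 h2 h3 d12 d13 d23 hU t1 t2 t3 ih1 ih2 ih3 =>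
    intro H hsub
    rintro ⟨ψ, hinj, hmem⟩
    -- basic facts
    have hne : ∀ a b : ℕ, a < l → b < l → a ≠ b → ψ a ≠ ψ b := by
      intro a b ha hb hab h
      exact hab (hinj (by simpa using ha) (by simpa using hb) h)
    have hedge : ∀ i, i < l - 2 → ({ψ i, ψ (i + 1), ψ (i + 2)} : Finset ℕ) ∈ H := by
      intro i hi
      have hcyc : ({i, i + 1, i + 2} : Finset ℕ) ∈ cycMinus l := by
        simp only [cycMinus, Finset.mem_union, Finset.mem_image, Finset.mem_range]
        exact Or.inl ⟨i, hi, rfl⟩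
      have := hmem _ hcyc
      simpa [Finset.image_insert] using this
    have hlastedge : ({ψ (l - 2), ψ (l - 1), ψ 0} : Finset ℕ) ∈ H := by
      have hcyc : ({l - 2, l - 1, 0} : Finset ℕ) ∈ cycMinus l := by
        simp [cycMinus]
      have := hmem _ hcyc
      simpa [Finset.image_insert] using this
    have cc2 : ∀ x ∈ V3, colFn V1 V2 x = 2 := fun x hx =>
      colFn_eq2 (Finset.disjoint_right.mp d13 hx) (Finset.disjoint_right.mp d23 hx)
    -- classification of edges
    have hclass : ∀ a b d : ℕ, a < l → b < l → d < l → a ≠ b → a ≠ d → b ≠ d →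
        ({ψ a, ψ b, ψ d} : Finset ℕ) ∈ H →
        (({ψ a, ψ b, ψ d} : Finset ℕ) ∈ H1 ∧ ψ a ∈ V1 ∧ ψ b ∈ V1 ∧ ψ d ∈ V1) ∨
        (({ψ a, ψ b, ψ d} : Finset ℕ) ∈ H2 ∧ ψ a ∈ V2 ∧ ψ b ∈ V2 ∧ ψ d ∈ V2) ∨
        (({ψ a, ψ b, ψ d} : Finset ℕ) ∈ H3 ∧ ψ a ∈ V3 ∧ ψ b ∈ V3 ∧ ψ d ∈ V3) ∨
        (colFn V1 V2 (ψ a) ≠ colFn V1 V2 (ψ b) ∧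
         colFn V1 V2 (ψ a) ≠ colFn V1 V2 (ψ d) ∧
         colFn V1 V2 (ψ b) ≠ colFn V1 V2 (ψ d)) := by
      intro a b d ha hb hd hab had hbd he
      have heH := hsub he
      simp only [Finset.mem_union] at heH
      rcases heH with ((hk | h1') | h2') | h3'
      · right; right; right
        simp only [ktriples, Finset.mem_image, Finset.mem_product] at hk
        obtain ⟨⟨p, q, r⟩, ⟨hp, hq, hr⟩, heq⟩ := hk
        have hmem' : ∀ x ∈ ({ψ a, ψ b, ψ d} : Finset ℕ), x = p ∨ x = q ∨ x = r := by
          intro x hx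
          rw [← heq] at hx
          simpa using hx
        have hca := hmem' (ψ a) (by simp)
        have hcb := hmem' (ψ b) (by simp)
        have hcd := hmem' (ψ d) (by simp)
        have cp : colFn V1 V2 p = 0 := colFn_eq0 hp
        have cq : colFn V1 V2 q = 1 := colFn_eq1 d12 hq
        have cr : colFn V1 V2 r = 2 := cc2 r hr
        have key : ∀ x y : ℕ, (x = p ∨ x = q ∨ x = r) → (y = p ∨ y = q ∨ y = r) →
            x ≠ y → colFn V1 V2 x ≠ colFn V1 V2 y := by
          rintro x y (rfl | rfl | rfl) (rfl | rfl | rfl) hxy <;>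
            simp_all
        exact ⟨key _ _ hca hcb (hne a b ha hb hab),
               key _ _ hca hcd (hne a d ha hd had),
               key _ _ hcb hcd (hne b d hb hd hbd)⟩
      · left
        have hs := trec_edge_subset t1 _ h1'
        exact ⟨h1', hs (by simp), hs (by simp), hs (by simp)⟩
      · right; left
        have hs := trec_edge_subset t2 _ h2'
        exact ⟨h2', hs (by simp), hs (by simp), hs (by simp)⟩
      · right; right; left
        have hs := trec_edge_subset t3 _ h3'
        exact ⟨h3', hs (by simp), hs (by simp), hs (by simp)⟩
    -- classify edge 0
    have h0 := hclass 0 1 2 (by omega) (by omega) (by omega) (by omega) (by omega)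
      (by omega) (by simpa using hedge 0 (by omega))
    rcases h0 with hm1 | hm2 | hm3 | hr0
    · -- all edges in H1
      have P : ∀ i, i < l - 2 →
          ψ i ∈ V1 ∧ ψ (i + 1) ∈ V1 ∧ ψ (i + 2) ∈ V1 ∧
          ({ψ i, ψ (i + 1), ψ (i + 2)} : Finset ℕ) ∈ H1 := by
        intro i
        induction i with
        | zero =>
          intro _
          exact ⟨hm1.2.1, by simpa using hm1.2.2.1, by simpa using hm1.2.2.2,
            by simpa using hm1.1⟩
        | succ n ihn =>
          intro hn
          obtain ⟨_, hn1, hn2, _⟩ := ihn (by omega)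
          have e12 : n + 1 + 1 = n + 2 := by ring
          have e13 : n + 1 + 2 = n + 3 := by ring
          have hc := hclass (n + 1) (n + 2) (n + 3) (by omega) (by omega) (by omega)
            (by omega) (by omega) (by omega) (by
              have := hedge (n + 1) hn
              rwa [e12, e13] at this)
          rcases hc with h | h | h | h
          · refine ⟨h.2.1, ?_, ?_, ?_⟩
            · rw [e12]; exact h.2.2.1
            · rw [e13]; exact h.2.2.2
            · rw [e12, e13]; exact h.1
          · exact absurd h.2.1 (Finset.disjoint_left.mp d12 hn1)
          · exact absurd h.2.1 (Finset.disjoint_left.mp d13 hn1)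
          · exact absurd ((colFn_eq0 hn1).trans (colFn_eq0 hn2).symm) h.1
      have hV1 : ∀ j, j < l → ψ j ∈ V1 := by
        intro j hj
        rcases Nat.lt_or_ge j 2 with h | h
        · interval_cases j
          · exact (P 0 (by omega)).1
          · exact (P 0 (by omega)).2.1
        · have := (P (j - 2) (by omega)).2.2.1
          rwa [show j - 2 + 2 = j by omega] at this
      have hlastH1 : ({ψ (l - 2), ψ (l - 1), ψ 0} : Finset ℕ) ∈ H1 := by
        have hc := hclass (l - 2) (l - 1) 0 (by omega) (by omega) (by omega)
          (by omega) (by omega) (by omega) hlastedge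
        rcases hc with h | h | h | h
        · exact h.1
        · exact absurd h.2.1 (Finset.disjoint_left.mp d12 (hV1 _ (by omega)))
        · exact absurd h.2.1 (Finset.disjoint_left.mp d13 (hV1 _ (by omega)))
        · exact absurd ((colFn_eq0 (hV1 _ (by omega) : ψ (l-2) ∈ V1)).trans
            (colFn_eq0 (hV1 _ (by omega) : ψ (l-1) ∈ V1)).symm) h.1
      refine ih1 (H ∩ H1) Finset.inter_subset_right ⟨ψ, hinj, ?_⟩
      intro e he
      simp only [cycMinus, Finset.mem_union, Finset.mem_image, Finset.mem_range,
        Finset.mem_singleton] at he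
      rcases he with ⟨i, hi, rfl⟩ | rfl
      · rw [Finset.mem_inter]
        have himg : ({i, i + 1, i + 2} : Finset ℕ).image ψ
            = {ψ i, ψ (i + 1), ψ (i + 2)} := by simp [Finset.image_insert]
        rw [himg]
        exact ⟨hedge i hi, (P i hi).2.2.2⟩
      · rw [Finset.mem_inter]
        have himg : ({l - 2, l - 1, 0} : Finset ℕ).image ψ
            = {ψ (l - 2), ψ (l - 1), ψ 0} := by simp [Finset.image_insert]
        rw [himg]
        exact ⟨hlastedge, hlastH1⟩
    · -- all edges in H2
      have P : ∀ i, i < l - 2 →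
          ψ i ∈ V2 ∧ ψ (i + 1) ∈ V2 ∧ ψ (i + 2) ∈ V2 ∧
          ({ψ i, ψ (i + 1), ψ (i + 2)} : Finset ℕ) ∈ H2 := by
        intro i
        induction i with
        | zero =>
          intro _
          exact ⟨hm2.2.1, by simpa using hm2.2.2.1, by simpa using hm2.2.2.2,
            by simpa using hm2.1⟩
        | succ n ihn =>
          intro hn
          obtain ⟨_, hn1, hn2, _⟩ := ihn (by omega)
          have e12 : n + 1 + 1 = n + 2 := by ring
          have e13 : n + 1 + 2 = n + 3 := by ring
          have hc := hclass (n + 1) (n + 2) (n + 3) (by omega) (by omega) (by omega)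
            (by omega) (by omega) (by omega) (by
              have := hedge (n + 1) hn
              rwa [e12, e13] at this)
          rcases hc with h | h | h | h
          · exact absurd hn1 (Finset.disjoint_left.mp d12 h.2.1)
          · refine ⟨h.2.1, ?_, ?_, ?_⟩
            · rw [e12]; exact h.2.2.1
            · rw [e13]; exact h.2.2.2
            · rw [e12, e13]; exact h.1
          · exact absurd h.2.1 (Finset.disjoint_left.mp d23 hn1)
          · exact absurd ((colFn_eq1 d12 hn1).trans (colFn_eq1 d12 hn2).symm) h.1
      have hV2 : ∀ j, j < l → ψ j ∈ V2 := by
        intro j hj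
        rcases Nat.lt_or_ge j 2 with h | h
        · interval_cases j
          · exact (P 0 (by omega)).1
          · exact (P 0 (by omega)).2.1
        · have := (P (j - 2) (by omega)).2.2.1
          rwa [show j - 2 + 2 = j by omega] at this
      have hlastH2 : ({ψ (l - 2), ψ (l - 1), ψ 0} : Finset ℕ) ∈ H2 := by
        have hc := hclass (l - 2) (l - 1) 0 (by omega) (by omega) (by omega)
          (by omega) (by omega) (by omega) hlastedge
        rcases hc with h | h | h | h
        · exact absurd (hV2 _ (by omega) : ψ (l-2) ∈ V2)
            (Finset.disjoint_left.mp d12 h.2.1)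
        · exact h.1
        · exact absurd h.2.1 (Finset.disjoint_left.mp d23 (hV2 _ (by omega)))
        · exact absurd ((colFn_eq1 d12 (hV2 _ (by omega) : ψ (l-2) ∈ V2)).trans
            (colFn_eq1 d12 (hV2 _ (by omega) : ψ (l-1) ∈ V2)).symm) h.1
      refine ih2 (H ∩ H2) Finset.inter_subset_right ⟨ψ, hinj, ?_⟩
      intro e he
      simp only [cycMinus, Finset.mem_union, Finset.mem_image, Finset.mem_range,
        Finset.mem_singleton] at he
      rcases he with ⟨i, hi, rfl⟩ | rfl
      · rw [Finset.mem_inter]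
        have himg : ({i, i + 1, i + 2} : Finset ℕ).image ψ
            = {ψ i, ψ (i + 1), ψ (i + 2)} := by simp [Finset.image_insert]
        rw [himg]
        exact ⟨hedge i hi, (P i hi).2.2.2⟩
      · rw [Finset.mem_inter]
        have himg : ({l - 2, l - 1, 0} : Finset ℕ).image ψ
            = {ψ (l - 2), ψ (l - 1), ψ 0} := by simp [Finset.image_insert]
        rw [himg]
        exact ⟨hlastedge, hlastH2⟩
    · -- all edges in H3
      have P : ∀ i, i < l - 2 →
          ψ i ∈ V3 ∧ ψ (i + 1) ∈ V3 ∧ ψ (i + 2) ∈ V3 ∧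
          ({ψ i, ψ (i + 1), ψ (i + 2)} : Finset ℕ) ∈ H3 := by
        intro i
        induction i with
        | zero =>
          intro _
          exact ⟨hm3.2.1, by simpa using hm3.2.2.1, by simpa using hm3.2.2.2,
            by simpa using hm3.1⟩
        | succ n ihn =>
          intro hn
          obtain ⟨_, hn1, hn2, _⟩ := ihn (by omega)
          have e12 : n + 1 + 1 = n + 2 := by ring
          have e13 : n + 1 + 2 = n + 3 := by ring
          have hc := hclass (n + 1) (n + 2) (n + 3) (by omega) (by omega) (by omega)
            (by omega) (by omega) (by omega) (by
              have := hedge (n + 1) hn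
              rwa [e12, e13] at this)
          rcases hc with h | h | h | h
          · exact absurd hn1 (Finset.disjoint_left.mp d13 h.2.1)
          · exact absurd hn1 (Finset.disjoint_left.mp d23 h.2.1)
          · refine ⟨h.2.1, ?_, ?_, ?_⟩
            · rw [e12]; exact h.2.2.1
            · rw [e13]; exact h.2.2.2
            · rw [e12, e13]; exact h.1
          · exact absurd ((cc2 _ hn1).trans (cc2 _ hn2).symm) h.1
      have hV3 : ∀ j, j < l → ψ j ∈ V3 := by
        intro j hj
        rcases Nat.lt_or_ge j 2 with h | h
        · interval_cases j
          · exact (P 0 (by omega)).1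
          · exact (P 0 (by omega)).2.1
        · have := (P (j - 2) (by omega)).2.2.1
          rwa [show j - 2 + 2 = j by omega] at this
      have hlastH3 : ({ψ (l - 2), ψ (l - 1), ψ 0} : Finset ℕ) ∈ H3 := by
        have hc := hclass (l - 2) (l - 1) 0 (by omega) (by omega) (by omega)
          (by omega) (by omega) (by omega) hlastedge
        rcases hc with h | h | h | h
        · exact absurd (hV3 _ (by omega) : ψ (l-2) ∈ V3)
            (Finset.disjoint_left.mp d13 h.2.1)
        · exact absurd (hV3 _ (by omega) : ψ (l-2) ∈ V3)
            (Finset.disjoint_left.mp d23 h.2.1)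
        · exact h.1
        · exact absurd ((cc2 _ (hV3 _ (by omega) : ψ (l-2) ∈ V3)).trans
            (cc2 _ (hV3 _ (by omega) : ψ (l-1) ∈ V3)).symm) h.1
      refine ih3 (H ∩ H3) Finset.inter_subset_right ⟨ψ, hinj, ?_⟩
      intro e he
      simp only [cycMinus, Finset.mem_union, Finset.mem_image, Finset.mem_range,
        Finset.mem_singleton] at he
      rcases he with ⟨i, hi, rfl⟩ | rfl
      · rw [Finset.mem_inter]
        have himg : ({i, i + 1, i + 2} : Finset ℕ).image ψ
            = {ψ i, ψ (i + 1), ψ (i + 2)} := by simp [Finset.image_insert]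
        rw [himg]
        exact ⟨hedge i hi, (P i hi).2.2.2⟩
      · rw [Finset.mem_inter]
        have himg : ({l - 2, l - 1, 0} : Finset ℕ).image ψ
            = {ψ (l - 2), ψ (l - 1), ψ 0} := by simp [Finset.image_insert]
        rw [himg]
        exact ⟨hlastedge, hlastH3⟩
    · -- all edges rainbow
      have R : ∀ i, i < l - 2 →
          colFn V1 V2 (ψ i) ≠ colFn V1 V2 (ψ (i + 1)) ∧
          colFn V1 V2 (ψ i) ≠ colFn V1 V2 (ψ (i + 2)) ∧
          colFn V1 V2 (ψ (i + 1)) ≠ colFn V1 V2 (ψ (i + 2)) := by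
        intro i
        induction i with
        | zero => intro _; simpa using hr0
        | succ n ihn =>
          intro hn
          have hprev := ihn (by omega)
          have e12 : n + 1 + 1 = n + 2 := by ring
          have e13 : n + 1 + 2 = n + 3 := by ring
          have hc := hclass (n + 1) (n + 2) (n + 3) (by omega) (by omega) (by omega)
            (by omega) (by omega) (by omega) (by
              have := hedge (n + 1) hn
              rwa [e12, e13] at this)
          rcases hc with h | h | h | h
          · exact absurd ((colFn_eq0 h.2.1).trans (colFn_eq0 h.2.2.1).symm) hprev.2.2
          · exact absurd ((colFn_eq1 d12 h.2.1).trans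
              (colFn_eq1 d12 h.2.2.1).symm) hprev.2.2
          · exact absurd ((cc2 _ h.2.1).trans (cc2 _ h.2.2.1).symm) hprev.2.2
          · rw [e12, e13]; exact h
      have hstep : ∀ i, i + 3 < l → colFn V1 V2 (ψ (i + 3)) = colFn V1 V2 (ψ i) := by
        intro i hi
        have hA := R i (by omega)
        have hB := R (i + 1) (by omega)
        rw [show i + 1 + 1 = i + 2 by ring, show i + 1 + 2 = i + 3 by ring] at hB
        have b0 := colFn_lt3 V1 V2 (ψ i)
        have b1 := colFn_lt3 V1 V2 (ψ (i + 1))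
        have b2 := colFn_lt3 V1 V2 (ψ (i + 2))
        have b3 := colFn_lt3 V1 V2 (ψ (i + 3))
        obtain ⟨a1, a2, a3⟩ := hA
        obtain ⟨c1, c2, c3⟩ := hB
        omega
      have hper : ∀ j, j < l → colFn V1 V2 (ψ j) = colFn V1 V2 (ψ (j % 3)) := by
        intro j
        induction j using Nat.strong_induction_on with
        | _ j ih =>
          intro hj
          by_cases h3 : j < 3
          · rw [Nat.mod_eq_of_lt h3]
          · have h1 : j - 3 + 3 = j := by omega
            have hs := hstep (j - 3) (by omega)
            rw [h1] at hs
            rw [hs, ih (j - 3) (by omega) (by omega),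
              show (j - 3) % 3 = j % 3 by omega]
      have hc := hclass (l - 2) (l - 1) 0 (by omega) (by omega) (by omega)
        (by omega) (by omega) (by omega) hlastedge
      have hR := R (l - 3) (by omega)
      rw [show l - 3 + 1 = l - 2 by omega, show l - 3 + 2 = l - 1 by omega] at hR
      rcases hc with h | h | h | h
      · exact absurd ((colFn_eq0 h.2.1).trans (colFn_eq0 h.2.2.1).symm) hR.2.2
      · exact absurd ((colFn_eq1 d12 h.2.1).trans (colFn_eq1 d12 h.2.2.1).symm) hR.2.2
      · exact absurd ((cc2 _ h.2.1).trans (cc2 _ h.2.2.1).symm) hR.2.2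
      · have hm : l % 3 = 1 ∨ l % 3 = 2 := by omega
        rcases hm with hm | hm
        · have hp := hper (l - 1) (by omega)
          rw [show (l - 1) % 3 = 0 by omega] at hp
          exact h.2.2 hp
        · have hp := hper (l - 2) (by omega)
          rw [show (l - 2) % 3 = 0 by omega] at hp
          exact h.2.1 hp
end

section
/- Let t2rec(n) denote the maximum ℓ₂-norm of an n-vertex T_rec-construction, so t2rec(n) = 0 for n ≤ 2 and for n ≥ 3, t2rec(n) = max{ n1·n2·n3·n + t2rec(n1) + t2rec(n2) + t2rec(n3) : n1+n2+n3 = n, each ni ≥ 1 }. Then t2rec(n)/n^4 → 1/26 as n → ∞. -/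
open Finset Filter

/-- Let `t2rec` satisfy `t2rec n = 0` for `n ≤ 2` and, for `n ≥ 3`,
`t2rec n = max{ n₁n₂n₃·n + t2rec n₁ + t2rec n₂ + t2rec n₃ : n₁+n₂+n₃ = n, nᵢ ≥ 1 }`.
Then `t2rec n / n⁴ → 1/26` as `n → ∞`. -/
theorem t2rec_limit (t2rec : ℕ → ℕ)
    (h0 : ∀ n ≤ 2, t2rec n = 0)
    (hrec : ∀ n, 3 ≤ n →
      t2rec n =
        ((Finset.range (n + 1) ×ˢ Finset.range (n + 1)).filter
            (fun p => 1 ≤ p.1 ∧ 1 ≤ p.2 ∧ p.1 + p.2 + 1 ≤ n)).sup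
          (fun p => p.1 * p.2 * (n - p.1 - p.2) * n
            + t2rec p.1 + t2rec p.2 + t2rec (n - p.1 - p.2))) :
    Tendsto (fun n : ℕ => (t2rec n : ℝ) / (n : ℝ) ^ 4) atTop (nhds (1 / 26)) := by
  -- Upper bound: 26 * t2rec n ≤ n^4
  have upper : ∀ n, 26 * t2rec n ≤ n ^ 4 := by
    intro n
    induction n using Nat.strong_induction_on with
    | _ n ih =>
      rcases le_or_gt n 2 with h | h
      · simp [h0 n h]
      · have h3 : 3 ≤ n := h
        rw [hrec n h3]
        set s := ((Finset.range (n + 1) ×ˢ Finset.range (n + 1)).filter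
            (fun p => 1 ≤ p.1 ∧ 1 ≤ p.2 ∧ p.1 + p.2 + 1 ≤ n)) with hs
        have hne : s.Nonempty := by
          refine ⟨(1, 1), ?_⟩
          simp only [hs, Finset.mem_filter, Finset.mem_product, Finset.mem_range]
          omega
        obtain ⟨p, hp, hsup⟩ := Finset.exists_mem_eq_sup s hne
          (fun p => p.1 * p.2 * (n - p.1 - p.2) * n
            + t2rec p.1 + t2rec p.2 + t2rec (n - p.1 - p.2))
        rw [hsup]
        simp only [hs, Finset.mem_filter, Finset.mem_product, Finset.mem_range] at hp
        obtain ⟨⟨ha1, hb1⟩, ha, hb, habn⟩ := hp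
        set a := p.1
        set b := p.2
        set c := n - a - b with hc
        have hsum : a + b + c = n := by omega
        have iha := ih a (by omega)
        have ihb := ih b (by omega)
        have ihc := ih c (by omega)
        have key : 26 * (a * b * c * n) + a ^ 4 + b ^ 4 + c ^ 4 ≤ n ^ 4 := by
          rw [← hsum]
          zify
          have ha' : (0:ℤ) ≤ a := by positivity
          have hb' : (0:ℤ) ≤ b := by positivity
          have hc' : (0:ℤ) ≤ c := by positivity
          nlinarith [mul_nonneg (mul_nonneg ha' hb') (sq_nonneg ((a:ℤ)-b)),
            mul_nonneg (mul_nonneg hb' hc') (sq_nonneg ((b:ℤ)-c)),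
            mul_nonneg (mul_nonneg ha' hc') (sq_nonneg ((a:ℤ)-c)),
            mul_nonneg (sq_nonneg (a:ℤ)) (sq_nonneg ((b:ℤ)-c)),
            mul_nonneg (sq_nonneg (b:ℤ)) (sq_nonneg ((a:ℤ)-c)),
            mul_nonneg (sq_nonneg (c:ℤ)) (sq_nonneg ((a:ℤ)-b))]
        calc 26 * (a * b * c * n + t2rec a + t2rec b + t2rec c)
            = 26 * (a * b * c * n) + 26 * t2rec a + 26 * t2rec b + 26 * t2rec c := by ring
          _ ≤ 26 * (a * b * c * n) + a ^ 4 + b ^ 4 + c ^ 4 := by omega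
          _ ≤ n ^ 4 := key
  -- Lower bound: n^4 ≤ 26 * t2rec n + 2 * n^3
  have lower : ∀ n, n ^ 4 ≤ 26 * t2rec n + 2 * n ^ 3 := by
    intro n
    induction n using Nat.strong_induction_on with
    | _ n ih =>
      rcases le_or_gt n 2 with h | h
      · have h00 : t2rec n = 0 := h0 n h
        rw [h00]
        interval_cases n <;> norm_num
      · have h3 : 3 ≤ n := h
        have split : ∀ a b : ℕ, 1 ≤ a → 1 ≤ b → a + b + 1 ≤ n →
            a * b * (n - a - b) * n + t2rec a + t2rec b + t2rec (n - a - b) ≤ t2rec n := by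
          intro a b ha1 hb1 hab
          rw [hrec n h3]
          have hmem : ((a, b) : ℕ × ℕ) ∈ ((Finset.range (n + 1) ×ˢ Finset.range (n + 1)).filter
              (fun p => 1 ≤ p.1 ∧ 1 ≤ p.2 ∧ p.1 + p.2 + 1 ≤ n)) := by
            simp only [Finset.mem_filter, Finset.mem_product, Finset.mem_range]
            omega
          exact Finset.le_sup (f := fun p : ℕ × ℕ => p.1 * p.2 * (n - p.1 - p.2) * n
            + t2rec p.1 + t2rec p.2 + t2rec (n - p.1 - p.2)) hmem
        obtain ⟨m, hm1, hmlt, hcase⟩ :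
            ∃ m, 1 ≤ m ∧ m + 1 < n ∧ (n = 3 * m ∨ n = 3 * m + 1 ∨ n = 3 * m + 2) :=
          ⟨n / 3, by omega, by omega, by omega⟩
        have ihm := ih m (by omega)
        have ihm1 := ih (m + 1) (by omega)
        rcases hcase with h' | h' | h'
        · have hsp := split m m (by omega) (by omega) (by omega)
          have hc : n - m - m = m := by omega
          rw [hc] at hsp
          subst h'
          nlinarith [hsp, ihm]
        · have hsp := split (m+1) m (by omega) (by omega) (by omega)
          have hc : n - (m+1) - m = m := by omega
          rw [hc] at hsp
          subst h'
          nlinarith [hsp, ihm, ihm1]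
        · have hsp := split (m+1) (m+1) (by omega) (by omega) (by omega)
          have hc : n - (m+1) - (m+1) = m := by omega
          rw [hc] at hsp
          subst h'
          nlinarith [hsp, ihm, ihm1]
  -- Squeeze
  have hlo : Tendsto (fun n : ℕ => 1/26 - (1/13) * (1/(n:ℝ))) atTop (nhds (1/26)) := by
    have h1 : Tendsto (fun n : ℕ => (1:ℝ)/(n:ℝ)) atTop (nhds 0) :=
      tendsto_one_div_atTop_nhds_zero_nat
    have := (tendsto_const_nhds (x := (1/26 : ℝ)) (f := atTop)).sub (h1.const_mul (1/13))
    simpa using this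
  refine tendsto_of_tendsto_of_tendsto_of_le_of_le' hlo tendsto_const_nhds ?_ ?_
  · filter_upwards [eventually_ge_atTop 1] with n hn
    have hnp : (0:ℝ) < (n:ℝ) := by exact_mod_cast hn
    have hn4 : (0:ℝ) < (n:ℝ)^4 := by positivity
    have hl : ((n:ℝ))^4 ≤ 26 * (t2rec n : ℝ) + 2 * (n:ℝ)^3 := by
      exact_mod_cast lower n
    rw [sub_le_iff_le_add, div_add' _ _ _ (ne_of_gt hn4)] at *
    rw [le_div_iff₀ hn4]
    have hinv : (1/13) * (1/(n:ℝ)) * (n:ℝ)^4 = (1/13) * (n:ℝ)^3 := by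
      field_simp
    nlinarith [hl, hinv]
  · filter_upwards [eventually_ge_atTop 1] with n hn
    have hnp : (0:ℝ) < (n:ℝ) := by exact_mod_cast hn
    have hn4 : (0:ℝ) < (n:ℝ)^4 := by positivity
    have hu : 26 * (t2rec n : ℝ) ≤ ((n:ℝ))^4 := by exact_mod_cast upper n
    rw [div_le_div_iff₀ hn4 (by norm_num : (0:ℝ) < 26)]
    linarith
end

section
/- Let V1, V2, V3 be disjoint finite sets with |V1| + |V2| + |V3| = n and each |Vi| ≥ 1, and let H be a 3-graph on V1 ∪ V2 ∪ V3. Let M be the set of transversal triples (one vertex in each Vi) not in H, and let MS2 be the set of copies of S2 in K[V1,V2,V3] that are not copies of S2 in H ∩ K[V1,V2,V3]. Then every triple e ∈ M is contained in exactly n - 3 members of MS2, and every member of MS2 contains at most two triples of M; consequently |M| · (n-3) ≤ 2·|MS2|. -/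
open Finset

/-- The copies of 𝕊₂ in a 3-graph `G`: unordered pairs of edges of `G`
spanning 4 vertices. -/
def s2copies (G : Finset (Finset ℕ)) : Finset (Finset (Finset ℕ)) :=
  G.powerset.filter fun P => P.card = 2 ∧ (P.sup id).card = 4


lemma pair_card (x y : ℕ) : ({x, y} : Finset ℕ).card = if x = y then 1 else 2 := by
  split <;> rename_i h
  · subst h; simp
  · rw [card_insert_of_notMem (by simp [h]), card_singleton]

lemma mem_ktriples {V1 V2 V3 : Finset ℕ} {f : Finset ℕ} :
    f ∈ ktriples V1 V2 V3 ↔ ∃ a ∈ V1, ∃ b ∈ V2, ∃ c ∈ V3, f = {a, b, c} := by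
  simp only [ktriples, mem_image, mem_product, Prod.exists]
  constructor
  · rintro ⟨a, b, c, ⟨ha, hb, hc⟩, rfl⟩; exact ⟨a, ha, b, hb, c, hc, rfl⟩
  · rintro ⟨a, ha, b, hb, c, hc, rfl⟩; exact ⟨a, b, c, ⟨ha, hb, hc⟩, rfl⟩

lemma count_neighbors (V1 V2 V3 : Finset ℕ)
    (h12 : Disjoint V1 V2) (h13 : Disjoint V1 V3) (h23 : Disjoint V2 V3)
    (e : Finset ℕ) (he : e ∈ ktriples V1 V2 V3) :
    ((ktriples V1 V2 V3).filter fun f => f ≠ e ∧ (e ∪ f).card = 4).card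
      = V1.card + V2.card + V3.card - 3 := by
  obtain ⟨a, ha, b, hb, c, hc, rfl⟩ := mem_ktriples.mp he
  have nab : a ≠ b := by rintro rfl; exact (disjoint_left.mp h12 ha) hb
  have nac : a ≠ c := by rintro rfl; exact (disjoint_left.mp h13 ha) hc
  have nbc : b ≠ c := by rintro rfl; exact (disjoint_left.mp h23 hb) hc
  have key : (ktriples V1 V2 V3).filter
        (fun f => f ≠ ({a, b, c} : Finset ℕ) ∧ (({a, b, c} : Finset ℕ) ∪ f).card = 4)
      = ((V1.erase a).image fun x => ({x, b, c} : Finset ℕ))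
        ∪ ((V2.erase b).image fun y => ({a, y, c} : Finset ℕ))
        ∪ ((V3.erase c).image fun z => ({a, b, z} : Finset ℕ)) := by
    ext f
    simp only [mem_filter, mem_union, mem_image, mem_erase]
    constructor
    · rintro ⟨hfK, hne, hcard⟩
      obtain ⟨x, hx, y, hy, z, hz, rfl⟩ := mem_ktriples.mp hfK
      have hu : ({a, b, c} : Finset ℕ) ∪ {x, y, z} = {a, x} ∪ ({b, y} ∪ {c, z}) := by
        ext w; simp; all_goals tauto
      have d1 : Disjoint ({a, x} : Finset ℕ) (({b, y} : Finset ℕ) ∪ {c, z}) := by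
        refine Disjoint.mono ?_ ?_ (disjoint_union_right.mpr ⟨h12, h13⟩)
        · exact insert_subset_iff.mpr ⟨ha, singleton_subset_iff.mpr hx⟩
        · exact union_subset_union (insert_subset_iff.mpr ⟨hb, singleton_subset_iff.mpr hy⟩)
            (insert_subset_iff.mpr ⟨hc, singleton_subset_iff.mpr hz⟩)
      have d2 : Disjoint ({b, y} : Finset ℕ) ({c, z} : Finset ℕ) :=
        Disjoint.mono (insert_subset_iff.mpr ⟨hb, singleton_subset_iff.mpr hy⟩)
          (insert_subset_iff.mpr ⟨hc, singleton_subset_iff.mpr hz⟩) h23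
      rw [hu, card_union_of_disjoint d1, card_union_of_disjoint d2,
        pair_card, pair_card, pair_card] at hcard
      rcases eq_or_ne a x with rfl | hax <;> rcases eq_or_ne b y with rfl | hby <;>
        rcases eq_or_ne c z with rfl | hcz
      · exact absurd rfl hne
      · exact Or.inr ⟨z, ⟨Ne.symm hcz, hz⟩, rfl⟩
      · exact Or.inl (Or.inr ⟨y, ⟨Ne.symm hby, hy⟩, rfl⟩)
      · simp [hby, hcz] at hcard
      · exact Or.inl (Or.inl ⟨x, ⟨Ne.symm hax, hx⟩, rfl⟩)
      · simp [hax, hcz] at hcard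
      · simp [hax, hby] at hcard
      · simp [hax, hby, hcz] at hcard
    · have ecard : ({a, b, c} : Finset ℕ).card = 3 := by
        rw [card_insert_of_notMem (by simp [nab, nac]),
          card_insert_of_notMem (by simp [nbc]), card_singleton]
      rintro ((⟨x, ⟨hxa, hx⟩, rfl⟩ | ⟨y, ⟨hyb, hy⟩, rfl⟩) | ⟨z, ⟨hzc, hz⟩, rfl⟩)
      · have nxb : x ≠ b := by rintro rfl; exact (disjoint_left.mp h12 hx) hb
        have nxc : x ≠ c := by rintro rfl; exact (disjoint_left.mp h13 hx) hc
        refine ⟨mem_ktriples.mpr ⟨x, hx, b, hb, c, hc, rfl⟩, ?_, ?_⟩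
        · intro h
          have : x ∈ ({a, b, c} : Finset ℕ) := by rw [← h]; simp
          simp [hxa, nxb, nxc] at this
        · have hins : ({a, b, c} : Finset ℕ) ∪ {x, b, c} = insert x {a, b, c} := by
            ext w; simp; all_goals tauto
          rw [hins, card_insert_of_notMem (by simp [hxa, nxb, nxc]), ecard]
      · have nya : y ≠ a := by rintro rfl; exact (disjoint_left.mp h12 ha) hy
        have nyc : y ≠ c := by rintro rfl; exact (disjoint_left.mp h23 hy) hc
        refine ⟨mem_ktriples.mpr ⟨a, ha, y, hy, c, hc, rfl⟩, ?_, ?_⟩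
        · intro h
          have : y ∈ ({a, b, c} : Finset ℕ) := by rw [← h]; simp
          simp [nya, hyb, nyc] at this
        · have hins : ({a, b, c} : Finset ℕ) ∪ {a, y, c} = insert y {a, b, c} := by
            ext w; simp; all_goals tauto
          rw [hins, card_insert_of_notMem (by simp [nya, hyb, nyc]), ecard]
      · have nza : z ≠ a := by rintro rfl; exact (disjoint_left.mp h13 ha) hz
        have nzb : z ≠ b := by rintro rfl; exact (disjoint_left.mp h23 hb) hz
        refine ⟨mem_ktriples.mpr ⟨a, ha, b, hb, z, hz, rfl⟩, ?_, ?_⟩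
        · intro h
          have : z ∈ ({a, b, c} : Finset ℕ) := by rw [← h]; simp
          simp [nza, nzb, hzc] at this
        · have hins : ({a, b, c} : Finset ℕ) ∪ {a, b, z} = insert z {a, b, c} := by
            ext w; simp; all_goals tauto
          rw [hins, card_insert_of_notMem (by simp [nza, nzb, hzc]), ecard]
  rw [key]
  have i1 : Set.InjOn (fun x => ({x, b, c} : Finset ℕ)) (V1.erase a) := by
    intro x hx x' hx' h
    simp only [coe_erase, Set.mem_diff, mem_coe] at hx hx'
    have h' : ({x, b, c} : Finset ℕ) = {x', b, c} := h
    have hm : x ∈ ({x', b, c} : Finset ℕ) := h' ▸ (by simp)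
    have nxb : x ≠ b := by rintro rfl; exact (disjoint_left.mp h12 hx.1) hb
    have nxc : x ≠ c := by rintro rfl; exact (disjoint_left.mp h13 hx.1) hc
    simpa [nxb, nxc] using hm
  have i2 : Set.InjOn (fun y => ({a, y, c} : Finset ℕ)) (V2.erase b) := by
    intro y hy y' hy' h
    simp only [coe_erase, Set.mem_diff, mem_coe] at hy hy'
    have h' : ({a, y, c} : Finset ℕ) = {a, y', c} := h
    have hm : y ∈ ({a, y', c} : Finset ℕ) := h' ▸ (by simp)
    have nya : y ≠ a := by rintro rfl; exact (disjoint_left.mp h12 ha) hy.1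
    have nyc : y ≠ c := by rintro rfl; exact (disjoint_left.mp h23 hy.1) hc
    simpa [nya, nyc] using hm
  have i3 : Set.InjOn (fun z => ({a, b, z} : Finset ℕ)) (V3.erase c) := by
    intro z hz z' hz' h
    simp only [coe_erase, Set.mem_diff, mem_coe] at hz hz'
    have h' : ({a, b, z} : Finset ℕ) = {a, b, z'} := h
    have hm : z ∈ ({a, b, z'} : Finset ℕ) := h' ▸ (by simp)
    have nza : z ≠ a := by rintro rfl; exact (disjoint_left.mp h13 ha) hz.1
    have nzb : z ≠ b := by rintro rfl; exact (disjoint_left.mp h23 hb) hz.1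
    simpa [nza, nzb] using hm
  have dA : Disjoint ((V1.erase a).image fun x => ({x, b, c} : Finset ℕ))
      (((V2.erase b).image fun y => ({a, y, c} : Finset ℕ))
        ∪ ((V3.erase c).image fun z => ({a, b, z} : Finset ℕ))) := by
    rw [disjoint_left]
    rintro f hf1 hf2
    simp only [mem_image, mem_erase, mem_union] at hf1 hf2
    obtain ⟨x, ⟨hxa, hx⟩, rfl⟩ := hf1
    have hnab : a ∉ ({x, b, c} : Finset ℕ) := by simp [Ne.symm hxa, nab, nac]
    rcases hf2 with ⟨y, _, heq⟩ | ⟨z, _, heq⟩ <;> exact hnab (heq ▸ (by simp))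
  have dB : Disjoint ((V2.erase b).image fun y => ({a, y, c} : Finset ℕ))
      ((V3.erase c).image fun z => ({a, b, z} : Finset ℕ)) := by
    rw [disjoint_left]
    rintro f hf1 hf2
    simp only [mem_image, mem_erase] at hf1 hf2
    obtain ⟨y, ⟨hyb, hy⟩, rfl⟩ := hf1
    obtain ⟨z, ⟨hzc, hz⟩, heq⟩ := hf2
    have hnb : b ∉ ({a, y, c} : Finset ℕ) := by simp [Ne.symm nab, Ne.symm hyb, nbc]
    exact hnb (heq ▸ (by simp))
  rw [union_assoc, card_union_of_disjoint dA, card_union_of_disjoint dB,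
    card_image_of_injOn i1, card_image_of_injOn i2, card_image_of_injOn i3,
    card_erase_of_mem ha, card_erase_of_mem hb, card_erase_of_mem hc]
  have c1 : 1 ≤ V1.card := card_pos.mpr ⟨a, ha⟩
  have c2 : 1 ≤ V2.card := card_pos.mpr ⟨b, hb⟩
  have c3 : 1 ≤ V3.card := card_pos.mpr ⟨c, hc⟩
  omega


lemma mem_s2copies {G : Finset (Finset ℕ)} {P : Finset (Finset ℕ)} :
    P ∈ s2copies G ↔ P ⊆ G ∧ P.card = 2 ∧ (P.sup id).card = 4 := by
  simp [s2copies, mem_filter, mem_powerset, and_assoc]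

/-- Double counting missing triples vs missing 𝕊₂'s: with `M` the set of
transversal triples not in `H` and `MS2` the set of copies of 𝕊₂ in
`K[V₁,V₂,V₃]` that are not copies of 𝕊₂ in `H ∩ K[V₁,V₂,V₃]`, every `e ∈ M`
lies in exactly `n - 3` members of `MS2`, every member of `MS2` contains at
most two triples of `M`, and consequently `|M|·(n-3) ≤ 2·|MS2|`. -/
theorem missing_S2_double_count (V1 V2 V3 : Finset ℕ)
    (h12 : Disjoint V1 V2) (h13 : Disjoint V1 V3) (h23 : Disjoint V2 V3)
    (h1 : 1 ≤ V1.card) (h2 : 1 ≤ V2.card) (h3 : 1 ≤ V3.card)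
    (n : ℕ) (hn : n = V1.card + V2.card + V3.card)
    (H : Finset (Finset ℕ)) :
    (∀ e ∈ ktriples V1 V2 V3 \ H,
        (((s2copies (ktriples V1 V2 V3) \
            s2copies (H ∩ ktriples V1 V2 V3)).filter fun P => e ∈ P).card = n - 3)) ∧
      (∀ P ∈ s2copies (ktriples V1 V2 V3) \ s2copies (H ∩ ktriples V1 V2 V3),
        (P.filter fun f => f ∈ ktriples V1 V2 V3 \ H).card ≤ 2) ∧
      (ktriples V1 V2 V3 \ H).card * (n - 3) ≤
        2 * (s2copies (ktriples V1 V2 V3) \ s2copies (H ∩ ktriples V1 V2 V3)).card := by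
  set K := ktriples V1 V2 V3 with hK
  have part1 : ∀ e ∈ K \ H,
      ((s2copies K \ s2copies (H ∩ K)).filter fun P => e ∈ P).card = n - 3 := by
    intro e he
    rw [mem_sdiff] at he
    have hinj : Set.InjOn (fun f => ({e, f} : Finset (Finset ℕ)))
        ((K.filter fun f => f ≠ e ∧ (e ∪ f).card = 4) : Finset (Finset ℕ)) := by
      intro f hf f' hf' hEq
      simp only [mem_coe, mem_filter] at hf hf'
      have h' : ({e, f} : Finset (Finset ℕ)) = {e, f'} := hEq
      have : f ∈ ({e, f'} : Finset (Finset ℕ)) := by rw [← h']; simp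
      rcases mem_insert.mp this with h | h
      · exact absurd h hf.2.1
      · exact mem_singleton.mp h
    have hset : ((s2copies K \ s2copies (H ∩ K)).filter fun P => e ∈ P)
        = (K.filter fun f => f ≠ e ∧ (e ∪ f).card = 4).image
            fun f => ({e, f} : Finset (Finset ℕ)) := by
      ext P
      simp only [mem_filter, mem_sdiff, mem_image]
      constructor
      · rintro ⟨⟨hPK, _⟩, heP⟩
        obtain ⟨hsub, hc2, hc4⟩ := mem_s2copies.mp hPK
        obtain ⟨u, v, huv, rfl⟩ := card_eq_two.mp hc2
        have hsup : ({u, v} : Finset (Finset ℕ)).sup id = u ∪ v := by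
          simp [Finset.sup_insert, Finset.sup_singleton, Finset.sup_eq_union]
        rcases mem_insert.mp heP with rfl | hv
        · refine ⟨v, ⟨hsub (by simp), fun h => huv h.symm, ?_⟩, rfl⟩
          rw [← hsup]; exact hc4
        · rw [mem_singleton] at hv
          subst hv
          refine ⟨u, ⟨hsub (by simp), huv, ?_⟩, pair_comm e u⟩
          rw [union_comm, ← hsup]; exact hc4
      · rintro ⟨f, ⟨hfK, hfne, hfcard⟩, rfl⟩
        refine ⟨⟨mem_s2copies.mpr ⟨?_, ?_, ?_⟩, ?_⟩, by simp⟩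
        · intro g hg
          rcases mem_insert.mp hg with rfl | hg
          · exact he.1
          · rw [mem_singleton] at hg; subst hg; exact hfK
        · exact card_pair fun h => hfne h.symm
        · have hsup : ({e, f} : Finset (Finset ℕ)).sup id = e ∪ f := by
            simp [Finset.sup_insert, Finset.sup_singleton, Finset.sup_eq_union]
          rw [hsup]; exact hfcard
        · intro hmem
          obtain ⟨hsub', _, _⟩ := mem_s2copies.mp hmem
          exact he.2 (mem_inter.mp (hsub' (by simp))).1
    rw [hset, card_image_of_injOn hinj,
      count_neighbors V1 V2 V3 h12 h13 h23 e he.1, hn]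
  have part2 : ∀ P ∈ s2copies K \ s2copies (H ∩ K),
      (P.filter fun f => f ∈ K \ H).card ≤ 2 := by
    intro P hP
    rw [mem_sdiff] at hP
    obtain ⟨_, hc2, _⟩ := mem_s2copies.mp hP.1
    exact le_of_le_of_eq (card_filter_le P _) hc2
  refine ⟨part1, part2, ?_⟩
  have := Finset.card_mul_le_card_mul (fun e P => e ∈ P) (s := K \ H)
    (t := s2copies K \ s2copies (H ∩ K)) (m := n - 3) (n := 2)
    (fun e he => by
      rw [bipartiteAbove]
      exact le_of_eq (part1 e he).symm)
    (fun P hP => by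
      rw [bipartiteBelow]
      have hflip : ((K \ H).filter fun f => f ∈ P) = P.filter fun f => f ∈ K \ H := by
        ext g; simp only [mem_filter]; tauto
      rw [hflip]
      exact part2 P hP)
  calc (K \ H).card * (n - 3) ≤ (s2copies K \ s2copies (H ∩ K)).card * 2 := this
    _ = 2 * (s2copies K \ s2copies (H ∩ K)).card := mul_comm _ _
end
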